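/- arXiv:1807.08130 — 2 statements merged into one kernel-verified Lean document; each statement's English description precedes it below -/
import Mathlib

section
/- The function V̲ is a constrained viscosity subsolution of the HJB equation max{1 − V_x, 𝓛[V]} = 0 on 𝒟*: V̲(T,y,v) ≤ y whenever 0 ≤ y and 0 ≤ v ≤ T, and for every (s,x,w) ∈ 𝒟* and every C¹ function φ : ℝ³ → ℝ such that V̲ − φ attains over 𝒟* a maximum equal to 0 at (s,x,w), one has 1 − ∂ₓφ(s,x,w) ≥ 0 or 𝓛[V̲,φ](s,x,w) ≥ 0. -/
open MeasureTheory

/-- The domain `𝒟* = {(s,x,w) : 0 ≤ s < T, x ≥ 0, 0 ≤ w ≤ s}`. -/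
def Dstar (T : ℝ) : Set (ℝ × ℝ × ℝ) :=
  {q | 0 ≤ q.1 ∧ q.1 < T ∧ 0 ≤ q.2.1 ∧ 0 ≤ q.2.2 ∧ q.2.2 ≤ q.1}

/-- Partial derivative in the first (time) variable. -/
noncomputable def pS (φ : ℝ × ℝ × ℝ → ℝ) (q : ℝ × ℝ × ℝ) : ℝ :=
  deriv (fun t => φ (t, q.2.1, q.2.2)) q.1

/-- Partial derivative in the second (wealth) variable. -/
noncomputable def pX (φ : ℝ × ℝ × ℝ → ℝ) (q : ℝ × ℝ × ℝ) : ℝ :=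
  deriv (fun y => φ (q.1, y, q.2.2)) q.2.1

/-- Partial derivative in the third (elapsed-time) variable. -/
noncomputable def pW (φ : ℝ × ℝ × ℝ → ℝ) (q : ℝ × ℝ × ℝ) : ℝ :=
  deriv (fun v => φ (q.1, q.2.1, v)) q.2.2

/-- The first-order integro-differential operator
`𝓛[u,φ](s,x,w) = -c·u + φ_s + p·φ_x + φ_w + λ(w)(∫₀ˣ u(s,x-α,0) dG(α) - u)`,
the integral being the Lebesgue–Stieltjes integral over `[0,x]`. -/
noncomputable def Lop (c p : ℝ) (lam : ℝ → ℝ) (G : StieltjesFunction ℝ)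
    (u φ : ℝ × ℝ × ℝ → ℝ) (q : ℝ × ℝ × ℝ) : ℝ :=
  -c * u q + pS φ q + p * pX φ q + pW φ q +
    lam q.2.2 * ((∫ α in Set.Icc (0 : ℝ) q.2.1, u (q.1, q.2.1 - α, 0) ∂G.measure) - u q)

/-- The distance-like function `d(s,x,w) = min{T - s, w, (√2/2)(s-w), x}`. -/
noncomputable def dD (T : ℝ) (q : ℝ × ℝ × ℝ) : ℝ :=
  min (T - q.1) (min q.2.2 (min (Real.sqrt 2 / 2 * (q.1 - q.2.2)) q.2.1))

/-- The subsolution candidate `V̲(s,x,w) = x + d(s,x,w) - N₂(T-s)`,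
`N₂ = √2/2 + 1 + (c+Λ)·2T/(2+√2)`. -/
noncomputable def Vlow (T c Λ : ℝ) (q : ℝ × ℝ × ℝ) : ℝ :=
  q.2.1 + dD T q -
    (Real.sqrt 2 / 2 + 1 + (c + Λ) * (2 * T) / (2 + Real.sqrt 2)) * (T - q.1)

/-!
At a test point `q = (s, x, w)` either the constraint `d ≤ x` is slack, and then near `q` the
function `V̲` is `x` plus a function of `(s, w)`, so `φ(s, ·, w) - ·` has a local minimum at `x`
and `φ_x = 1`; or `d = x`. In the latter case `V̲` grows at rate at least `p - 1 + N₂` along the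
characteristic direction `(1, p, 1)`, which stays in `𝒟*`, so `φ_s + p φ_x + φ_w ≥ p - 1 + N₂`;
the discount and jump terms cost at most `(c + Λ)(x + d) = 2(c + Λ) d`, and `(2 + √2) d ≤ T` is
exactly what the last summand of `N₂` pays for.
-/

open Filter Topology

theorem le_setIntegral_of_forall_le_of_nonpos {α : Type*} [MeasurableSpace α] {μ : Measure α}
    [IsProbabilityMeasure μ] {s : Set α} (hs : MeasurableSet s) {f : α → ℝ} {a : ℝ}
    (ha : a ≤ 0) (hf : ∀ x ∈ s, a ≤ f x) : a ≤ ∫ x in s, f x ∂μ := by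
  by_cases hint : IntegrableOn f s μ
  · calc a ≤ a * μ.real s := le_mul_of_le_one_right ha measureReal_le_one
      _ ≤ ∫ x in s, f x ∂μ := setIntegral_ge_of_const_le_real hs (measure_ne_top μ s) hf hint
  · rwa [integral_undef hint]

theorem HasLineDerivAt.le_of_eventually_le {E : Type*} [NormedAddCommGroup E] [NormedSpace ℝ E]
    {f : E → ℝ} {f' m : ℝ} {x v : E} (hf : HasLineDerivAt ℝ f f' x v)
    (h : ∀ᶠ t in 𝓝[>] (0 : ℝ), f x + m * t ≤ f (x + t • v)) : m ≤ f' := by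
  refine ge_of_tendsto hf.tendsto_slope_zero_right ?_
  filter_upwards [h, self_mem_nhdsWithin] with t ht (ht0 : 0 < t)
  rw [smul_eq_mul, le_inv_mul_iff₀ ht0]
  linarith

section PartialDerivatives

variable {φ : ℝ × ℝ × ℝ → ℝ} {q : ℝ × ℝ × ℝ}

theorem pS_eq_fderiv (hφ : DifferentiableAt ℝ φ q) : pS φ q = fderiv ℝ φ q (1, 0, 0) :=
  (hφ.hasFDerivAt.comp_hasDerivAt q.1
    ((hasDerivAt_id _).prodMk ((hasDerivAt_const _ _).prodMk (hasDerivAt_const _ _)))).deriv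

theorem hasDerivAt_pX (hφ : DifferentiableAt ℝ φ q) :
    HasDerivAt (fun y => φ (q.1, y, q.2.2)) (fderiv ℝ φ q (0, 1, 0)) q.2.1 :=
  hφ.hasFDerivAt.comp_hasDerivAt q.2.1
    ((hasDerivAt_const _ _).prodMk ((hasDerivAt_id _).prodMk (hasDerivAt_const _ _)))

theorem pX_eq_fderiv (hφ : DifferentiableAt ℝ φ q) : pX φ q = fderiv ℝ φ q (0, 1, 0) :=
  (hasDerivAt_pX hφ).deriv

theorem pW_eq_fderiv (hφ : DifferentiableAt ℝ φ q) : pW φ q = fderiv ℝ φ q (0, 0, 1) :=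
  (hφ.hasFDerivAt.comp_hasDerivAt q.2.2
    ((hasDerivAt_const _ _).prodMk ((hasDerivAt_const _ _).prodMk (hasDerivAt_id _)))).deriv

theorem pS_add_mul_pX_add_pW (hφ : DifferentiableAt ℝ φ q) (a : ℝ) :
    pS φ q + a * pX φ q + pW φ q = fderiv ℝ φ q (1, a, 1) := by
  have hv : ((1 : ℝ), a, (1 : ℝ)) = (1, 0, 0) + a • (0, 1, 0) + (0, 0, 1) := by simp
  rw [pS_eq_fderiv hφ, pX_eq_fderiv hφ, pW_eq_fderiv hφ, hv, map_add, map_add, map_smul,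
    smul_eq_mul]

end PartialDerivatives

noncomputable def N₂ (T c Λ : ℝ) : ℝ :=
  Real.sqrt 2 / 2 + 1 + (c + Λ) * (2 * T) / (2 + Real.sqrt 2)

section Subsolution

variable {T c Λ p : ℝ} {q : ℝ × ℝ × ℝ}

theorem Vlow_eq : Vlow T c Λ q = q.2.1 + dD T q - N₂ T c Λ * (T - q.1) := rfl

theorem N₂_nonneg (hT : 0 ≤ T) (hcΛ : 0 ≤ c + Λ) : 0 ≤ N₂ T c Λ := by
  unfold N₂; positivity

theorem Vlow_terminal_le (y v : ℝ) : Vlow T c Λ (T, y, v) ≤ y := by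
  have hd : dD T (T, y, v) ≤ T - T := min_le_left _ _
  rw [Vlow_eq]
  linarith

theorem le_dD_iff {a : ℝ} : a ≤ dD T q ↔
    a ≤ T - q.1 ∧ a ≤ q.2.2 ∧ a ≤ Real.sqrt 2 / 2 * (q.1 - q.2.2) ∧ a ≤ q.2.1 := by
  simp only [dD, le_min_iff]

theorem dD_eq_min_snd : dD T q =
    min (min (T - q.1) (min q.2.2 (Real.sqrt 2 / 2 * (q.1 - q.2.2)))) q.2.1 := by
  simp only [dD, min_assoc]

theorem dD_update_snd_of_lt {y : ℝ} (hd : dD T q < q.2.1) (hy : dD T q < y) :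
    dD T (q.1, y, q.2.2) = dD T q := by
  simp only [dD_eq_min_snd] at hd hy ⊢
  have hm := (min_lt_iff.1 hd).resolve_right (lt_irrefl _)
  rw [min_eq_left hm.le] at hy ⊢
  exact min_eq_left hy.le

theorem dD_le_snd (q : ℝ × ℝ × ℝ) : dD T q ≤ q.2.1 :=
  (le_dD_iff.1 le_rfl).2.2.2

theorem dD_nonneg (hq : q ∈ Dstar T) : 0 ≤ dD T q := by
  obtain ⟨hs0, hsT, hx0, hw0, hws⟩ := hq
  refine le_dD_iff.2 ⟨by linarith, hw0, ?_, hx0⟩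
  have := Real.sqrt_nonneg 2
  nlinarith

theorem two_add_sqrt_two_mul_dD_le (q : ℝ × ℝ × ℝ) : (2 + Real.sqrt 2) * dD T q ≤ T := by
  obtain ⟨h1, h2, h3, -⟩ := le_dD_iff.1 (le_refl (dD T q))
  have hsq : Real.sqrt 2 * (Real.sqrt 2 / 2 * (q.1 - q.2.2)) = q.1 - q.2.2 := by
    linear_combination (q.1 - q.2.2) / 2 * Real.mul_self_sqrt (zero_le_two : (0 : ℝ) ≤ 2)
  linarith [mul_le_mul_of_nonneg_left h3 (Real.sqrt_nonneg 2)]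

theorem dD_sub_le_dD_add_smul (hp : 0 ≤ p) {h : ℝ} (hh : 0 ≤ h) :
    dD T q - h ≤ dD T (q + h • (1, p, 1)) := by
  obtain ⟨h1, h2, h3, h4⟩ := le_dD_iff.1 (le_refl (dD T q))
  refine le_dD_iff.2 ⟨?_, ?_, ?_, ?_⟩ <;>
    simp only [Prod.fst_add, Prod.snd_add, Prod.smul_mk, smul_eq_mul, mul_one] <;>
    nlinarith

theorem Vlow_add_smul_ge (hp : 0 ≤ p) {h : ℝ} (hh : 0 ≤ h) :
    Vlow T c Λ q + (p - 1 + N₂ T c Λ) * h ≤ Vlow T c Λ (q + h • (1, p, 1)) := by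
  have hd := dD_sub_le_dD_add_smul (T := T) (q := q) hp hh
  simp only [Vlow_eq, Prod.fst_add, Prod.snd_add, Prod.smul_mk, smul_eq_mul, mul_one] at hd ⊢
  linarith

theorem add_smul_mem_Dstar (hq : q ∈ Dstar T) (hp : 0 ≤ p) {h : ℝ} (hh : 0 ≤ h)
    (hhT : h < T - q.1) : q + h • (1, p, 1) ∈ Dstar T := by
  obtain ⟨hs0, hsT, hx0, hw0, hws⟩ := hq
  refine ⟨?_, ?_, ?_, ?_, ?_⟩ <;>
    simp only [Prod.fst_add, Prod.snd_add, Prod.smul_mk, smul_eq_mul, mul_one] <;>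
    nlinarith

theorem le_pS_add_mul_pX_add_pW {φ : ℝ × ℝ × ℝ → ℝ} (hq : q ∈ Dstar T) (hp : 0 ≤ p)
    (hφ : DifferentiableAt ℝ φ q) (hle : ∀ r ∈ Dstar T, Vlow T c Λ r ≤ φ r)
    (heq : φ q = Vlow T c Λ q) :
    p - 1 + N₂ T c Λ ≤ pS φ q + p * pX φ q + pW φ q := by
  rw [pS_add_mul_pX_add_pW hφ]
  refine (hφ.hasFDerivAt.hasLineDerivAt _).le_of_eventually_le ?_
  filter_upwards [Ioo_mem_nhdsGT (sub_pos.2 hq.2.1)] with h ⟨hh0, hhT⟩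
  calc φ q + (p - 1 + N₂ T c Λ) * h
      = Vlow T c Λ q + (p - 1 + N₂ T c Λ) * h := by rw [heq]
    _ ≤ Vlow T c Λ (q + h • (1, p, 1)) := Vlow_add_smul_ge hp hh0.le
    _ ≤ φ (q + h • (1, p, 1)) := hle _ (add_smul_mem_Dstar hq hp hh0.le hhT)

theorem neg_le_setIntegral_Vlow (G : StieltjesFunction ℝ) [IsProbabilityMeasure G.measure]
    (hq : q ∈ Dstar T) (hN : 0 ≤ N₂ T c Λ) :
    -(N₂ T c Λ * (T - q.1)) ≤
      ∫ α in Set.Icc (0 : ℝ) q.2.1, Vlow T c Λ (q.1, q.2.1 - α, 0) ∂G.measure := by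
  obtain ⟨hs0, hsT, hx0, hw0, hws⟩ := hq
  refine le_setIntegral_of_forall_le_of_nonpos measurableSet_Icc
    (neg_nonpos.2 (mul_nonneg hN (by linarith))) fun α ⟨hα0, hαx⟩ => ?_
  have hd : 0 ≤ dD T (q.1, q.2.1 - α, 0) :=
    dD_nonneg ⟨hs0, hsT, by simpa using hαx, le_rfl, hs0⟩
  rw [Vlow_eq]
  dsimp only
  linarith

theorem Lop_Vlow_ge (lam : ℝ → ℝ) (G : StieltjesFunction ℝ) [IsProbabilityMeasure G.measure]
    {φ : ℝ × ℝ × ℝ → ℝ} (hq : q ∈ Dstar T) (hc : 0 ≤ c) (hlam0 : 0 ≤ lam q.2.2)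
    (hlamΛ : lam q.2.2 ≤ Λ) :
    pS φ q + p * pX φ q + pW φ q - (c + Λ) * (q.2.1 + dD T q) ≤
      Lop c p lam G (Vlow T c Λ) φ q := by
  have hN : 0 ≤ N₂ T c Λ := N₂_nonneg (by linarith [hq.1, hq.2.1]) (by linarith)
  have hsT : 0 ≤ T - q.1 := by linarith [hq.2.1]
  have hxd : 0 ≤ q.2.1 + dD T q := add_nonneg hq.2.2.1 (dD_nonneg hq)
  have hI := neg_le_setIntegral_Vlow G hq hN
  have hjump : -(q.2.1 + dD T q) ≤
      (∫ α in Set.Icc (0 : ℝ) q.2.1, Vlow T c Λ (q.1, q.2.1 - α, 0) ∂G.measure) -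
        Vlow T c Λ q := by
    rw [Vlow_eq]; linarith
  have hdiscount : -c * (q.2.1 + dD T q) ≤ -c * Vlow T c Λ q := by
    rw [Vlow_eq]; nlinarith [mul_nonneg hc (mul_nonneg hN hsT)]
  unfold Lop
  nlinarith [mul_le_mul_of_nonneg_left hjump hlam0, mul_le_mul_of_nonneg_right hlamΛ hxd]

theorem Lop_Vlow_nonneg_of_dD_eq (lam : ℝ → ℝ) (G : StieltjesFunction ℝ)
    [IsProbabilityMeasure G.measure] {φ : ℝ × ℝ × ℝ → ℝ} (hq : q ∈ Dstar T)
    (hd : dD T q = q.2.1) (hc : 0 ≤ c) (hp : 0 ≤ p) (hlam0 : 0 ≤ lam q.2.2)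
    (hlamΛ : lam q.2.2 ≤ Λ) (hφ : DifferentiableAt ℝ φ q)
    (hle : ∀ r ∈ Dstar T, Vlow T c Λ r ≤ φ r) (heq : φ q = Vlow T c Λ q) :
    0 ≤ Lop c p lam G (Vlow T c Λ) φ q := by
  have hgrowth := le_pS_add_mul_pX_add_pW hq hp hφ hle heq
  have hLop := Lop_Vlow_ge (p := p) lam G hq hc hlam0 hlamΛ (φ := φ)
  have hjumps : (c + Λ) * (q.2.1 + dD T q) ≤ (c + Λ) * (2 * T) / (2 + Real.sqrt 2) := by
    rw [le_div_iff₀ (by positivity), ← hd]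
    nlinarith [two_add_sqrt_two_mul_dD_le (T := T) q]
  unfold N₂ at hgrowth
  linarith [Real.sqrt_nonneg 2]

theorem pX_eq_one_of_dD_lt {φ : ℝ × ℝ × ℝ → ℝ} (hq : q ∈ Dstar T) (hd : dD T q < q.2.1)
    (hφ : DifferentiableAt ℝ φ q) (hle : ∀ r ∈ Dstar T, Vlow T c Λ r ≤ φ r)
    (heq : φ q = Vlow T c Λ q) : pX φ q = 1 := by
  have hmin : IsLocalMin (fun y => φ (q.1, y, q.2.2) - y) q.2.1 := by
    filter_upwards [Ioi_mem_nhds hd] with y hy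
    have hmem : (q.1, y, q.2.2) ∈ Dstar T :=
      ⟨hq.1, hq.2.1, (dD_nonneg hq).trans hy.le, hq.2.2.2⟩
    have hVy := hle _ hmem
    rw [Vlow_eq, dD_update_snd_of_lt hd hy] at hVy
    rw [heq, Vlow_eq]
    dsimp only at hVy ⊢
    linarith
  have := hmin.hasDerivAt_eq_zero ((hasDerivAt_pX hφ).sub (hasDerivAt_id _))
  rw [pX_eq_fderiv hφ]
  linarith

end Subsolution

theorem stmt6_general (T c p Λ : ℝ) (hc : 0 < c) (hp : 0 < p)
    (lam : ℝ → ℝ)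
    (hlam : ∀ w ∈ Set.Icc (0 : ℝ) T, 0 < lam w ∧ lam w ≤ Λ)
    (G : StieltjesFunction ℝ)
    (hGprob : IsProbabilityMeasure G.measure) :
    (∀ y v : ℝ, 0 ≤ y → 0 ≤ v → v ≤ T → Vlow T c Λ (T, y, v) ≤ y) ∧
    (∀ q ∈ Dstar T, ∀ φ : ℝ × ℝ × ℝ → ℝ, ContDiff ℝ 1 φ →
      Vlow T c Λ q - φ q = 0 →
      (∀ r ∈ Dstar T, Vlow T c Λ r - φ r ≤ 0) →
      1 - pX φ q ≥ 0 ∨ Lop c p lam G (Vlow T c Λ) φ q ≥ 0) := by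
  refine ⟨fun y v _ _ _ => Vlow_terminal_le y v, fun q hq φ hφ hq0 hmax => ?_⟩
  have hφq : DifferentiableAt ℝ φ q := hφ.differentiable one_ne_zero q
  have hle : ∀ r ∈ Dstar T, Vlow T c Λ r ≤ φ r := fun r hr => sub_nonpos.1 (hmax r hr)
  have heq : φ q = Vlow T c Λ q := (sub_eq_zero.1 hq0).symm
  obtain ⟨hlam0, hlamΛ⟩ := hlam q.2.2 ⟨hq.2.2.2.1, hq.2.2.2.2.trans hq.2.1.le⟩
  rcases (dD_le_snd q).eq_or_lt with hd | hd
  · exact Or.inr (Lop_Vlow_nonneg_of_dD_eq lam G hq hd hc.le hp.le hlam0.le hlamΛ hφq hle heq)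
  · exact Or.inl (by rw [pX_eq_one_of_dD_lt hq hd hφq hle heq]; norm_num)

/-- `V̲` is a constrained viscosity subsolution of `max{1 - V_x, 𝓛[V]} = 0` on `𝒟*`:
`V̲(T,y,v) ≤ y` for `0 ≤ y`, `0 ≤ v ≤ T`, and whenever a C¹ function `φ` is such that
`V̲ - φ` attains over `𝒟*` a maximum equal to `0` at `(s,x,w) ∈ 𝒟*`, then
`1 - φ_x(s,x,w) ≥ 0` or `𝓛[V̲,φ](s,x,w) ≥ 0`. -/
theorem stmt6 (T c p Λ : ℝ) (hT : 0 < T) (hc : 0 < c) (hp : 0 < p) (hΛ : 0 < Λ)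
    (lam : ℝ → ℝ) (hlamc : ContinuousOn lam (Set.Icc 0 T))
    (hlam : ∀ w ∈ Set.Icc (0 : ℝ) T, 0 < lam w ∧ lam w ≤ Λ)
    (G : StieltjesFunction ℝ) (hGc : Continuous G)
    (hGprob : IsProbabilityMeasure G.measure) (hGsupp : G.measure (Set.Iio 0) = 0) :
    (∀ y v : ℝ, 0 ≤ y → 0 ≤ v → v ≤ T → Vlow T c Λ (T, y, v) ≤ y) ∧
    (∀ q ∈ Dstar T, ∀ φ : ℝ × ℝ × ℝ → ℝ, ContDiff ℝ 1 φ →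
      Vlow T c Λ q - φ q = 0 →
      (∀ r ∈ Dstar T, Vlow T c Λ r - φ r ≤ 0) →
      1 - pX φ q ≥ 0 ∨ Lop c p lam G (Vlow T c Λ) φ q ≥ 0) :=
  stmt6_general T c p Λ hc hp lam hlam G hGprob
end

section
/- Let (s,x,w) ∈ 𝒟 satisfy w = (√2/2)(s − w) and w < min{T − s, x}. Then there exists no C¹ function φ : ℝ³ → ℝ such that V̄ − φ attains a local minimum over 𝒟 at (s,x,w); in particular the set of C¹ test functions touching V̄ from below at such a point over 𝒟 is empty. -/
/-- The open domain `𝒟 = {(s,x,w) : 0 < s < T, x > 0, 0 < w < s}`. -/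
def Dint (T : ℝ) : Set (ℝ × ℝ × ℝ) :=
  {q | 0 < q.1 ∧ q.1 < T ∧ 0 < q.2.1 ∧ 0 < q.2.2 ∧ q.2.2 < q.1}

/-- The supersolution candidate `V̄(s,x,w) = x + d(s,x,w) + N₁(T-s)`,
`N₁ = √2/2 + 1 + 2p`. -/
noncomputable def Vbar (T p : ℝ) (q : ℝ × ℝ × ℝ) : ℝ :=
  q.2.1 + dD T q + (Real.sqrt 2 / 2 + 1 + 2 * p) * (T - q.1)

/-! Along the `w`-direction through a kink point, `V̄` is bounded above by a concave kink
`t ↦ V̄(q) + min(t, -(√2/2) t)`, with left slope `1` and right slope `-√2/2`. A `C¹` function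
touching `V̄` from below would lie under this kink too, and a function differentiable at a
point where it sits under a concave kink must have derivative equal to every slope in between,
which is impossible. -/

open Filter Topology

theorem min_mul_le_mul {α β k u : ℝ} (hβk : β ≤ k) (hkα : k ≤ α) :
    min (α * u) (β * u) ≤ k * u := by
  rcases le_total 0 u with hu | hu
  · exact (min_le_right _ _).trans (mul_le_mul_of_nonneg_right hβk hu)
  · exact (min_le_left _ _).trans (mul_le_mul_of_nonpos_right hkα hu)

theorem not_differentiableAt_of_sub_le_min {f : ℝ → ℝ} {a α β : ℝ} (hβα : β < α)
    (hf : ∀ᶠ t in 𝓝 a, f t - f a ≤ min (α * (t - a)) (β * (t - a))) :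
    ¬ DifferentiableAt ℝ f a := by
  intro hd
  have deriv_eq : ∀ k, β ≤ k → k ≤ α → deriv f a = k := by
    intro k hβk hkα
    have hmax : IsLocalMax (fun t => f t - k * (t - a)) a := by
      filter_upwards [hf] with t ht
      linarith [min_mul_le_mul (u := t - a) hβk hkα]
    have hderiv : HasDerivAt (fun t => f t - k * (t - a)) (deriv f a - k * 1) a :=
      hd.hasDerivAt.sub (((hasDerivAt_id a).sub_const a).const_mul k)
    linarith [hmax.hasDerivAt_eq_zero hderiv]
  linarith [deriv_eq α hβα.le le_rfl, deriv_eq β le_rfl hβα.le]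

theorem isOpen_Dint (T : ℝ) : IsOpen (Dint T) := by
  simp only [Dint, Set.ofPred_and]
  refine (isOpen_lt continuous_const continuous_fst).inter
    ((isOpen_lt continuous_fst continuous_const).inter
    ((isOpen_lt continuous_const continuous_snd.fst).inter
    ((isOpen_lt continuous_const continuous_snd.snd).inter
    (isOpen_lt continuous_snd.snd continuous_fst))))

section Kink

variable {T p : ℝ} {q : ℝ × ℝ × ℝ}

theorem dD_eq_of_kink (hkink : q.2.2 = Real.sqrt 2 / 2 * (q.1 - q.2.2))
    (hlt : q.2.2 < min (T - q.1) q.2.1) : dD T q = q.2.2 := by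
  obtain ⟨hwT, hwx⟩ := lt_min_iff.mp hlt
  rw [dD, ← hkink, min_eq_left hwx.le, min_self, min_eq_right hwT.le]

theorem dD_le_of_kink (hkink : q.2.2 = Real.sqrt 2 / 2 * (q.1 - q.2.2)) (t : ℝ) :
    dD T (q.1, q.2.1, q.2.2 + t) ≤ q.2.2 + min t (-(Real.sqrt 2 / 2 * t)) := by
  have hw : dD T (q.1, q.2.1, q.2.2 + t) ≤ q.2.2 + t :=
    (min_le_right _ _).trans (min_le_left _ _)
  have hc : dD T (q.1, q.2.1, q.2.2 + t) ≤ Real.sqrt 2 / 2 * (q.1 - (q.2.2 + t)) :=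
    (min_le_right _ _).trans ((min_le_right _ _).trans (min_le_left _ _))
  rw [add_min]
  exact le_min hw (hc.trans_eq (by linear_combination -hkink))

theorem Vbar_sub_le_of_kink (hkink : q.2.2 = Real.sqrt 2 / 2 * (q.1 - q.2.2))
    (hlt : q.2.2 < min (T - q.1) q.2.1) (t : ℝ) :
    Vbar T p (q.1, q.2.1, q.2.2 + t) - Vbar T p q ≤ min (1 * t) (-(Real.sqrt 2 / 2) * t) := by
  have := dD_le_of_kink (T := T) hkink t
  simp only [Vbar, dD_eq_of_kink hkink hlt, one_mul, neg_mul]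
  linarith

end Kink

theorem stmt9_general (T p : ℝ)
    (q : ℝ × ℝ × ℝ) (hq : q ∈ Dint T)
    (hkink : q.2.2 = Real.sqrt 2 / 2 * (q.1 - q.2.2))
    (hlt : q.2.2 < min (T - q.1) q.2.1) :
    ¬ ∃ φ : ℝ × ℝ × ℝ → ℝ, ContDiff ℝ 1 φ ∧
      ∃ ε > 0, ∀ r ∈ Dint T, dist r q < ε →
        Vbar T p q - φ q ≤ Vbar T p r - φ r := by
  rintro ⟨φ, hφ, ε, hε, hmin⟩
  set line : ℝ → ℝ × ℝ × ℝ := fun t => (q.1, q.2.1, q.2.2 + t)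
  have hline : Continuous line := by fun_prop
  have hline0 : line 0 = q := by simp [line]
  have hlocal : ∀ᶠ r in 𝓝 q, Vbar T p q - φ q ≤ Vbar T p r - φ r := by
    filter_upwards [(isOpen_Dint T).mem_nhds hq, Metric.ball_mem_nhds q hε] with r hr hrε
    exact hmin r hr hrε
  refine not_differentiableAt_of_sub_le_min (f := φ ∘ line) (a := 0)
    (α := 1) (β := -(Real.sqrt 2 / 2)) (by linarith [Real.sqrt_nonneg 2]) ?_
    ((hφ.differentiable one_ne_zero).comp (by fun_prop : Differentiable ℝ line) 0)
  filter_upwards [(hline.tendsto' 0 q hline0).eventually hlocal] with t ht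
  simp only [Function.comp, hline0, sub_zero]
  linarith [Vbar_sub_le_of_kink (p := p) hkink hlt t]

/-- At a kink point of `d` where `w = (√2/2)(s-w)` and `w < min{T-s, x}`, there is no
C¹ test function `φ` such that `V̄ - φ` attains a local minimum over `𝒟` at `(s,x,w)`:
the set of C¹ test functions touching `V̄` from below at such a point over `𝒟` is empty. -/
theorem stmt9 (T p : ℝ) (hT : 0 < T) (hp : 0 < p)
    (q : ℝ × ℝ × ℝ) (hq : q ∈ Dint T)
    (hkink : q.2.2 = Real.sqrt 2 / 2 * (q.1 - q.2.2))
    (hlt : q.2.2 < min (T - q.1) q.2.1) :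
    ¬ ∃ φ : ℝ × ℝ × ℝ → ℝ, ContDiff ℝ 1 φ ∧
      ∃ ε > 0, ∀ r ∈ Dint T, dist r q < ε →
        Vbar T p q - φ q ≤ Vbar T p r - φ r :=
  stmt9_general T p q hq hkink hlt
end
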